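/- Let P_l and P_u be Borel probability measures on ℝ^d with finite second moments, and let X^l ~ P_l, X^u ~ P_u, and λ ~ β(α, α) (α > 0) be mutually independent. Let P̃ be the law of λ·X^l + (1−λ)·X^u. With the euclidean generalized energy distance J²(P, Q) = 2·E[‖X − Y‖²] − E[‖X − X'‖²] − E[‖Y − Y'‖²] (X, X' ~ P and Y, Y' ~ Q mutually independent, ‖·‖ the euclidean norm), one has J²(P̃, P_u) ≤ J²(P_l, P_u); that is, the energy distance between the empirical distribution of the interpolated pseudo-samples and that of the unlabeled samples is smaller than or equal to that between the labeled and unlabeled samples. -/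

import Mathlib

open MeasureTheory ProbabilityTheory

/-- The Beta(α, α) probability measure on `[0,1]`, given by its density
`Γ(2α)/(Γ(α)Γ(α)) · x^(α−1) (1−x)^(α−1)` with respect to Lebesgue measure on `[0,1]`. -/
noncomputable def betaMeasure (α : ℝ) : Measure ℝ :=
  (volume.restrict (Set.Icc (0 : ℝ) 1)).withDensity
    (fun x => ENNReal.ofReal
      (Real.Gamma (2 * α) / (Real.Gamma α * Real.Gamma α) * x ^ (α - 1) * (1 - x) ^ (α - 1)))

/-- The euclidean generalized energy distance (with squared euclidean distances) between two
probability measures `P, Q` on `ℝ^d`: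
`J²(P, Q) = 2 E[‖X − Y‖²] − E[‖X − X'‖²] − E[‖Y − Y'‖²]`, where `X, X' ~ P`, `Y, Y' ~ Q`
are mutually independent. -/
noncomputable def energyDistSq {d : ℕ} (P Q : Measure (EuclideanSpace ℝ (Fin d))) : ℝ :=
  2 * (∫ p, ‖p.1 - p.2‖ ^ 2 ∂(P.prod Q))
    - (∫ p, ‖p.1 - p.2‖ ^ 2 ∂(P.prod P))
    - (∫ p, ‖p.1 - p.2‖ ^ 2 ∂(Q.prod Q))

/-!
Expanding the square and using Fubini, `J²(P, Q) = 2 ‖E P - E Q‖²`: the second moments cancel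
and only the means survive. By independence of `λ` and `(X^l, X^u)`, the mean of `P̃` is
`t • E P_l + (1 - t) • E P_u` with `t = E λ ∈ [0, 1]`, so `J²(P̃, P_u) = t² J²(P_l, P_u)`.
-/

open scoped RealInnerProductSpace ENNReal

section SecondMoment

variable {E : Type*} [NormedAddCommGroup E] [InnerProductSpace ℝ E] [CompleteSpace E]
  [MeasurableSpace E] {P Q : Measure E} [IsProbabilityMeasure P] [IsProbabilityMeasure Q]

theorem integral_norm_sub_sq_prod (hP : MemLp id 2 P) (hQ : MemLp id 2 Q) :
    ∫ z, ‖z.1 - z.2‖ ^ 2 ∂(P.prod Q)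
      = ∫ x, ‖x‖ ^ 2 ∂P + ∫ y, ‖y‖ ^ 2 ∂Q - 2 * ⟪∫ x, x ∂P, ∫ y, y ∂Q⟫ := by
  have hP1 : Integrable id P := hP.integrable one_le_two
  have hQ1 : Integrable id Q := hQ.integrable one_le_two
  have hPsq : Integrable (fun x : E => ‖x‖ ^ 2) P := hP.integrable_norm_pow'
  have hQsq : Integrable (fun x : E => ‖x‖ ^ 2) Q := hQ.integrable_norm_pow'
  have hinner : Integrable (fun z : E × E => ⟪z.1, z.2⟫) (P.prod Q) :=
    hP1.op_fst_snd continuous_inner ⟨1, fun x y => by simpa using abs_real_inner_le_norm x y⟩ hQ1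
  have hmixed : ∫ z, ⟪z.1, z.2⟫ ∂(P.prod Q) = ⟪∫ x, x ∂P, ∫ y, y ∂Q⟫ :=
    integral_prod_bilin (innerSL ℝ) hP1 hQ1
  have hP2 : Integrable (fun z : E × E => ‖z.1‖ ^ 2) (P.prod Q) := hPsq.comp_fst Q
  have hQ2 : Integrable (fun z : E × E => ‖z.2‖ ^ 2) (P.prod Q) := hQsq.comp_snd P
  simp_rw [norm_sub_sq_real]
  rw [integral_add (hP2.sub' (hinner.const_mul 2)) hQ2, integral_sub hP2 (hinner.const_mul 2),
    integral_const_mul, integral_fun_fst (fun x : E => ‖x‖ ^ 2),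
    integral_fun_snd (fun y : E => ‖y‖ ^ 2), hmixed]
  simp only [probReal_univ, smul_eq_mul, one_mul]
  ring

end SecondMoment

theorem energyDistSq_eq_two_mul_norm_sub_sq {d : ℕ} (P Q : Measure (EuclideanSpace ℝ (Fin d)))
    [IsProbabilityMeasure P] [IsProbabilityMeasure Q] (hP : MemLp id 2 P) (hQ : MemLp id 2 Q) :
    energyDistSq P Q = 2 * ‖∫ x, x ∂P - ∫ y, y ∂Q‖ ^ 2 := by
  rw [energyDistSq, integral_norm_sub_sq_prod hP hQ, integral_norm_sub_sq_prod hP hP,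
    integral_norm_sub_sq_prod hQ hQ, norm_sub_sq_real, real_inner_self_eq_norm_sq,
    real_inner_self_eq_norm_sq]
  ring

theorem betaMeasure_compl_Icc (α : ℝ) : _root_.betaMeasure α (Set.Icc 0 1)ᶜ = 0 :=
  withDensity_absolutelyContinuous _ _ (by simp [Measure.restrict_apply' measurableSet_Icc])

theorem ae_mem_Icc_of_map_eq_betaMeasure {Ω : Type*} [MeasurableSpace Ω] {μ : Measure Ω}
    {L : Ω → ℝ} {α : ℝ} (hL : AEMeasurable L μ) (hLaw : μ.map L = _root_.betaMeasure α) :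
    ∀ᵐ ω ∂μ, L ω ∈ Set.Icc 0 1 :=
  ae_of_ae_map hL (hLaw ▸ mem_ae_iff.mpr (betaMeasure_compl_Icc α))

theorem integral_id_map_eq_integral {Ω E : Type*} [MeasurableSpace Ω] {μ : Measure Ω}
    [NormedAddCommGroup E] [NormedSpace ℝ E] [CompleteSpace E] [MeasurableSpace E] [BorelSpace E]
    [SecondCountableTopology E] {X : Ω → E} (hX : AEMeasurable X μ) :
    ∫ x, x ∂(μ.map X) = ∫ ω, X ω ∂μ :=
  integral_map hX aestronglyMeasurable_id

section Mixture

variable {Ω E : Type*} [MeasurableSpace Ω] {μ : Measure Ω} [NormedAddCommGroup E]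
  [NormedSpace ℝ E] {L : Ω → ℝ} {X Y : Ω → E}

theorem memLp_top_of_ae_mem_Icc (hL : AEStronglyMeasurable L μ)
    (hL01 : ∀ᵐ ω ∂μ, L ω ∈ Set.Icc 0 1) : MemLp L ∞ μ :=
  memLp_top_of_bound hL 1 (hL01.mono fun _ h => by
    rw [Real.norm_eq_abs, abs_le]; constructor <;> linarith [h.1, h.2])

theorem MeasureTheory.MemLp.convexComb {p : ℝ≥0∞} [IsFiniteMeasure μ]
    (hL : AEStronglyMeasurable L μ) (hL01 : ∀ᵐ ω ∂μ, L ω ∈ Set.Icc 0 1) (hX : MemLp X p μ)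
    (hY : MemLp Y p μ) :
    MemLp (fun ω => L ω • X ω + (1 - L ω) • Y ω) p μ := by
  have hLtop := memLp_top_of_ae_mem_Icc hL hL01
  exact (hX.smul hLtop).add (hY.smul ((memLp_top_const 1).sub hLtop))

theorem integral_convexComb_of_indepFun [MeasurableSpace E] [BorelSpace E] [CompleteSpace E]
    [IsProbabilityMeasure μ] (hL : AEStronglyMeasurable L μ) (hL01 : ∀ᵐ ω ∂μ, L ω ∈ Set.Icc 0 1)
    (hX : Integrable X μ) (hY : Integrable Y μ) (hindep : IndepFun L (fun ω => (X ω, Y ω)) μ) :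
    ∫ ω, L ω • X ω + (1 - L ω) • Y ω ∂μ
      = (∫ ω, L ω ∂μ) • ∫ ω, X ω ∂μ + (1 - ∫ ω, L ω ∂μ) • ∫ ω, Y ω ∂μ := by
  have hLtop := memLp_top_of_ae_mem_Icc hL hL01
  have hL' : MemLp (fun ω => 1 - L ω) ∞ μ := (memLp_top_const 1).sub hLtop
  have hLX : Integrable (fun ω => L ω • X ω) μ := hX.smul_of_top_right hLtop
  have hLY : Integrable (fun ω => (1 - L ω) • Y ω) μ := hY.smul_of_top_right hL'
  have hindepX : IndepFun L X μ := hindep.comp measurable_id measurable_fst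
  have hindepY : IndepFun (fun ω => 1 - L ω) Y μ :=
    hindep.comp (measurable_const.sub measurable_id) measurable_snd
  rw [integral_add hLX hLY,
    hindepX.integral_fun_smul_eq_smul_integral hL hX.aestronglyMeasurable,
    hindepY.integral_fun_smul_eq_smul_integral hL'.aestronglyMeasurable hY.aestronglyMeasurable,
    integral_sub (integrable_const 1) (hLtop.integrable le_top), integral_const]
  simp only [probReal_univ, smul_eq_mul, mul_one]

end Mixture

theorem norm_convexComb_sub_right_le {E : Type*} [SeminormedAddCommGroup E] [NormedSpace ℝ E]
    {t : ℝ} (ht : t ∈ Set.Icc 0 1) (a b : E) : ‖t • a + (1 - t) • b - b‖ ≤ ‖a - b‖ := by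
  rw [show t • a + (1 - t) • b - b = t • (a - b) by module, norm_smul, Real.norm_of_nonneg ht.1]
  exact mul_le_of_le_one_left (norm_nonneg _) ht.2

theorem energyDistSq_interpolated_le_general
    {d : ℕ} (α : ℝ)
    (Pl Pu : Measure (EuclideanSpace ℝ (Fin d)))
    [IsProbabilityMeasure Pl] [IsProbabilityMeasure Pu]
    (hPl2 : MemLp (id : EuclideanSpace ℝ (Fin d) → EuclideanSpace ℝ (Fin d)) 2 Pl)
    (hPu2 : MemLp (id : EuclideanSpace ℝ (Fin d) → EuclideanSpace ℝ (Fin d)) 2 Pu)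
    {Ω : Type*} [MeasurableSpace Ω] (μ : Measure Ω) [IsProbabilityMeasure μ]
    (Xl Xu : Ω → EuclideanSpace ℝ (Fin d)) (L : Ω → ℝ)
    (hXlmeas : Measurable Xl) (hXumeas : Measurable Xu) (hLmeas : Measurable L)
    (hXlLaw : μ.map Xl = Pl) (hXuLaw : μ.map Xu = Pu) (hLLaw : μ.map L = _root_.betaMeasure α)
    (hindep₂ : IndepFun L (fun ω => (Xl ω, Xu ω)) μ) :
    energyDistSq (μ.map (fun ω => L ω • Xl ω + (1 - L ω) • Xu ω)) Pu
      ≤ energyDistSq Pl Pu := by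
  subst hXlLaw hXuLaw
  set X := fun ω => L ω • Xl ω + (1 - L ω) • Xu ω
  have hX : AEMeasurable X μ := by fun_prop
  have hL01 := ae_mem_Icc_of_map_eq_betaMeasure hLmeas.aemeasurable hLLaw
  have hXl2 : MemLp Xl 2 μ :=
    (memLp_map_measure_iff aestronglyMeasurable_id hXlmeas.aemeasurable).mp hPl2
  have hXu2 : MemLp Xu 2 μ :=
    (memLp_map_measure_iff aestronglyMeasurable_id hXumeas.aemeasurable).mp hPu2
  have hX2 : MemLp id 2 (μ.map X) := (memLp_map_measure_iff aestronglyMeasurable_id hX).mpr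
    (hXl2.convexComb hLmeas.aestronglyMeasurable hL01 hXu2)
  have : IsProbabilityMeasure (μ.map X) := Measure.isProbabilityMeasure_map hX
  rw [energyDistSq_eq_two_mul_norm_sub_sq _ _ hX2 hPu2,
    energyDistSq_eq_two_mul_norm_sub_sq _ _ hPl2 hPu2,
    integral_id_map_eq_integral hX, integral_id_map_eq_integral hXlmeas.aemeasurable,
    integral_id_map_eq_integral hXumeas.aemeasurable,
    integral_convexComb_of_indepFun hLmeas.aestronglyMeasurable hL01
      (hXl2.integrable one_le_two) (hXu2.integrable one_le_two) hindep₂]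
  have hLint : Integrable L μ :=
    (memLp_top_of_ae_mem_Icc hLmeas.aestronglyMeasurable hL01).integrable le_top
  gcongr
  apply norm_convexComb_sub_right_le
  exact (convex_Icc 0 1).integral_mem isClosed_Icc hL01 hLint

/-- Let `P_l, P_u` be Borel probability measures on `ℝ^d` with finite second
moments, let `X^l ~ P_l`, `X^u ~ P_u` and `λ ~ β(α, α)` be mutually independent, and let
`P̃` be the law of `λ • X^l + (1 − λ) • X^u`. Then `J²(P̃, P_u) ≤ J²(P_l, P_u)`. -/
theorem energyDistSq_interpolated_le
    {d : ℕ} (α : ℝ) (hα : 0 < α)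
    (Pl Pu : Measure (EuclideanSpace ℝ (Fin d)))
    [IsProbabilityMeasure Pl] [IsProbabilityMeasure Pu]
    (hPl2 : MemLp (id : EuclideanSpace ℝ (Fin d) → EuclideanSpace ℝ (Fin d)) 2 Pl)
    (hPu2 : MemLp (id : EuclideanSpace ℝ (Fin d) → EuclideanSpace ℝ (Fin d)) 2 Pu)
    {Ω : Type*} [MeasurableSpace Ω] (μ : Measure Ω) [IsProbabilityMeasure μ]
    (Xl Xu : Ω → EuclideanSpace ℝ (Fin d)) (L : Ω → ℝ)
    (hXlmeas : Measurable Xl) (hXumeas : Measurable Xu) (hLmeas : Measurable L)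
    (hXlLaw : μ.map Xl = Pl) (hXuLaw : μ.map Xu = Pu) (hLLaw : μ.map L = _root_.betaMeasure α)
    (hindep₁ : IndepFun Xl Xu μ)
    (hindep₂ : IndepFun L (fun ω => (Xl ω, Xu ω)) μ) :
    energyDistSq (μ.map (fun ω => L ω • Xl ω + (1 - L ω) • Xu ω)) Pu
      ≤ energyDistSq Pl Pu :=
  energyDistSq_interpolated_le_general α Pl Pu hPl2 hPu2 μ Xl Xu L hXlmeas hXumeas hLmeas hXlLaw
    hXuLaw hLLaw hindep₂
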